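/- arXiv:1612.01157 — 2 statements merged into one kernel-verified Lean document; each statement's English description precedes it below -/
import Mathlib

section
/- The ternary sum p_3(x) + 2·p_3(y) + 2·p_8(z) of generalized polygonal numbers is universal over ℤ; that is, for every nonnegative integer n there exist integers x, y, z such that p_3(x) + 2·p_3(y) + 2·p_8(z) = n. -/
/-- The generalized polygonal number of order `m` evaluated at the integer `x`:
`p_m(x) = ((m-2)*x^2 - (m-4)*x) / 2` (the numerator is always even, so integer
division is exact). -/
def polygonal (m x : ℤ) : ℤ := ((m - 2) * x ^ 2 - (m - 4) * x) / 2

/-!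
Multiplying by `24` and completing squares, `p₃(x) + 2 p₃(y) + 2 p₈(z) = n` reads
`24 n + 25 = 3 (2x+1)² + 6 (2y+1)² + 16 (3z-1)²`; so it suffices to write `N = 24 n + 25` as
`3 a² + 6 b² + 16 c²` with `3 ∤ c` (then `a`, `b` are odd as `N ≡ 1 mod 8`, and `c = ±(3z - 1)`).

The form `x² + y² + 2 z²` has class number one: by Hermite's argument a positive definite integral
ternary form of determinant `2` has minimum `1`, and what remains after splitting off a minimal
vector is a binary form of determinant `2`, which Gauss reduction identifies with `y² + 2 z²`.
As in Dirichlet's proof of the three-square theorem, take a prime `q ≡ 1 (mod 8)` with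
`q ≡ -2 (mod N)`; for `D N = q + 2`, quadratic reciprocity makes `-D` a square `β²` modulo `q`, and
`[[E, -β, 1], [-β, q, 0], [1, 0, N]]` with `q E = β² + D` is such a form, so `N = x² + y² + 2 z²`.

Reducing modulo `8` turns this into `N = u² + 2 v² + 16 c²` with `u² ≠ N`; a `3`-adic descent on
`2 v² + 16 c²` makes `3 ∤ c`, after which `3 ∣ u² + 2 v²` and `u² + 2 v² = 3 a² + 6 b²` with
`u = a + 2 b`, `v = a - b`.
-/

open Matrix

namespace Matrix

variable {n : Type*}

theorem PosDef.int_transpose_eq {A : Matrix n n ℤ} (hA : A.PosDef) : Aᵀ = A := by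
  simpa [conjTranspose_eq_transpose_of_trivial] using hA.isHermitian.eq

variable [Fintype n]

theorem PosDef.int_dotProduct_mulVec_pos {A : Matrix n n ℤ} (hA : A.PosDef) {v : n → ℤ}
    (hv : v ≠ 0) : 0 < v ⬝ᵥ A *ᵥ v := by
  simpa using hA.dotProduct_mulVec_pos hv

theorem PosDef.of_int {A : Matrix n n ℤ} (hsymm : Aᵀ = A)
    (hpos : ∀ v : n → ℤ, v ≠ 0 → 0 < v ⬝ᵥ A *ᵥ v) : A.PosDef :=
  .of_dotProduct_mulVec_pos (by simpa [IsHermitian, conjTranspose_eq_transpose_of_trivial])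
    (by simpa using hpos)

theorem PosDef.int_transpose_mul_mul [DecidableEq n] {A U : Matrix n n ℤ} (hA : A.PosDef)
    (hU : IsUnit U) : (Uᵀ * A * U).PosDef := by
  simpa [conjTranspose_eq_transpose_of_trivial] using
    hA.conjTranspose_mul_mul_same (mulVec_injective_of_isUnit hU)

theorem det_transpose_mul_mul_of_isUnit [DecidableEq n] {U : Matrix n n ℤ} (hU : IsUnit U)
    (A : Matrix n n ℤ) : (Uᵀ * A * U).det = A.det := by
  have h := Int.isUnit_mul_self ((isUnit_iff_isUnit_det U).mp hU)
  rw [det_mul, det_mul, det_transpose]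
  linear_combination A.det * h

theorem dotProduct_mulVec_transpose_mul_mul (U A : Matrix n n ℤ) (w : n → ℤ) :
    w ⬝ᵥ (Uᵀ * A * U) *ᵥ w = (U *ᵥ w) ⬝ᵥ A *ᵥ (U *ᵥ w) := by
  rw [← mulVec_mulVec, ← mulVec_mulVec, dotProduct_mulVec, vecMul_transpose]

theorem transpose_mul_mul_apply (U A : Matrix n n ℤ) (i j : n) :
    (Uᵀ * A * U) i j = (fun k => U k i) ⬝ᵥ A *ᵥ (fun k => U k j) := by
  simp only [mul_apply, transpose_apply, dotProduct, mulVec, Finset.mul_sum, Finset.sum_mul]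
  rw [Finset.sum_comm]
  simp only [mul_comm, mul_left_comm]

theorem PosDef.int_exists_forall_le [Nonempty n] {A : Matrix n n ℤ} (hA : A.PosDef) :
    ∃ v : n → ℤ, v ≠ 0 ∧ ∀ w : n → ℤ, w ≠ 0 → v ⬝ᵥ A *ᵥ v ≤ w ⬝ᵥ A *ᵥ w := by
  obtain ⟨m, ⟨v, hv, rfl⟩, hmin⟩ := Int.exists_least_of_bdd
    (P := fun m => ∃ v : n → ℤ, v ≠ 0 ∧ v ⬝ᵥ A *ᵥ v = m)
    ⟨0, fun _ ⟨v, hv, hm⟩ => hm ▸ (hA.int_dotProduct_mulVec_pos hv).le⟩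
    ⟨_, 1, one_ne_zero, rfl⟩
  exact ⟨v, hv, fun w hw => hmin _ ⟨w, hw, rfl⟩⟩

theorem PosDef.isUnit_of_forall_dvd {A : Matrix n n ℤ} (hA : A.PosDef) {v : n → ℤ}
    (hv : v ≠ 0) (hmin : ∀ w : n → ℤ, w ≠ 0 → v ⬝ᵥ A *ᵥ v ≤ w ⬝ᵥ A *ᵥ w) {d : ℤ}
    (hd : ∀ i, d ∣ v i) : IsUnit d := by
  choose w hw using hd
  have hvw : v = d • w := funext hw
  have hd0 : d ≠ 0 := by rintro rfl; simp [hvw] at hv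
  have hw0 : w ≠ 0 := by rintro rfl; simp [hvw] at hv
  have hval : v ⬝ᵥ A *ᵥ v = d ^ 2 * (w ⬝ᵥ A *ᵥ w) := by
    rw [hvw, mulVec_smul, dotProduct_smul, smul_dotProduct, smul_eq_mul, smul_eq_mul]; ring
  have hpos := hA.int_dotProduct_mulVec_pos hw0
  have hle := hmin w hw0
  rw [Int.isUnit_iff_abs_eq]
  by_contra hne
  have h2 : 2 ≤ |d| := by have := Int.one_le_abs hd0; omega
  have : 4 ≤ d ^ 2 := by rw [← sq_abs]; nlinarith
  nlinarith

end Matrix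

theorem exists_two_mul_abs_add_mul_le (a b : ℤ) (ha : 0 < a) : ∃ t : ℤ, 2 * |b + t * a| ≤ a := by
  refine ⟨(a - 2 * b) / (2 * a), ?_⟩
  rw [← abs_two, ← abs_mul, abs_two, abs_le]
  constructor <;>
  · have := Int.mul_ediv_add_emod (a - 2 * b) (2 * a)
    have := Int.emod_nonneg (a - 2 * b) (by omega : 2 * a ≠ 0)
    have := Int.emod_lt_of_pos (a - 2 * b) (by omega : 0 < 2 * a)
    nlinarith

def IsGaussReduced (R : Matrix (Fin 2) (Fin 2) ℤ) : Prop :=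
  2 * |R 0 1| ≤ R 0 0 ∧ R 0 0 ≤ R 1 1

theorem IsGaussReduced.three_mul_sq_le {R : Matrix (Fin 2) (Fin 2) ℤ} (hR : IsGaussReduced R)
    (hsymm : Rᵀ = R) : 3 * R 0 0 ^ 2 ≤ 4 * R.det := by
  have h10 : R 1 0 = R 0 1 := congrFun (congrFun hsymm 0) 1
  have hb : 4 * R 0 1 ^ 2 ≤ R 0 0 ^ 2 := by
    rw [← sq_abs (R 0 1)]; nlinarith [abs_nonneg (R 0 1), hR.1]
  rw [det_fin_two, h10]
  nlinarith [hR.1, hR.2, abs_nonneg (R 0 1)]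

theorem exists_isGaussReduced (H : Matrix (Fin 2) (Fin 2) ℤ) (hH : H.PosDef) :
    ∃ U : Matrix (Fin 2) (Fin 2) ℤ, IsUnit U ∧ IsGaussReduced (Uᵀ * H * U) := by
  induction hk : (H 0 0).toNat using Nat.strong_induction_on generalizing H with
  | _ k ih =>
  have h10 : H 1 0 = H 0 1 := congrFun (congrFun hH.int_transpose_eq 0) 1
  obtain ⟨t, ht⟩ := exists_two_mul_abs_add_mul_le (H 0 0) (H 0 1) hH.diag_pos
  set T : Matrix (Fin 2) (Fin 2) ℤ := !![1, t; 0, 1]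
  have hT : IsUnit T := by simp [isUnit_iff_isUnit_det, T]
  set H₁ : Matrix (Fin 2) (Fin 2) ℤ := Tᵀ * H * T
  have hH₁ : H₁ = !![H 0 0, H 0 1 + t * H 0 0; H 0 1 + t * H 0 0, H₁ 1 1] := by
    ext i j; fin_cases i <;> fin_cases j <;> simp [H₁, T, mul_apply, Fin.sum_univ_two, h10] <;> ring
  by_cases hle : H 0 0 ≤ H₁ 1 1
  · refine ⟨T, hT, ?_⟩
    change IsGaussReduced H₁
    rw [IsGaussReduced, hH₁]
    simpa using ⟨ht, hle⟩
  · set S : Matrix (Fin 2) (Fin 2) ℤ := !![0, -1; 1, 0]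
    have hS : IsUnit S := by simp [isUnit_iff_isUnit_det, S]
    have hH₂ : (Sᵀ * H₁ * S) 0 0 = H₁ 1 1 := by simp [S, mul_apply, Fin.sum_univ_two]
    have h₁₁ : 0 < H₁ 1 1 := (hH.int_transpose_mul_mul hT).diag_pos
    obtain ⟨U, hU, hred⟩ := ih ((Sᵀ * H₁ * S) 0 0).toNat (by rw [hH₂]; omega) _
      ((hH.int_transpose_mul_mul hT).int_transpose_mul_mul hS) rfl
    refine ⟨T * S * U, (hT.mul hS).mul hU, ?_⟩
    simpa only [H₁, transpose_mul, Matrix.mul_assoc] using hred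

theorem exists_ne_zero_three_mul_sq_le (H : Matrix (Fin 2) (Fin 2) ℤ) (hH : H.PosDef) :
    ∃ v : Fin 2 → ℤ, v ≠ 0 ∧ 3 * (v ⬝ᵥ H *ᵥ v) ^ 2 ≤ 4 * H.det := by
  obtain ⟨U, hU, hred⟩ := exists_isGaussReduced H hH
  have hbound := hred.three_mul_sq_le (hH.int_transpose_mul_mul hU).int_transpose_eq
  rw [det_transpose_mul_mul_of_isUnit hU, transpose_mul_mul_apply] at hbound
  refine ⟨fun k => U k 0, fun h0 => ?_, hbound⟩
  have h := (isUnit_iff_isUnit_det U).mp hU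
  rw [det_fin_two, congrFun h0 0, congrFun h0 1] at h
  simp at h

theorem exists_transpose_mul_mul_eq_diagonal_one_two (H : Matrix (Fin 2) (Fin 2) ℤ)
    (hH : H.PosDef) (hdet : H.det = 2) :
    ∃ U : Matrix (Fin 2) (Fin 2) ℤ, IsUnit U ∧ Uᵀ * H * U = diagonal ![1, 2] := by
  obtain ⟨U, hU, hred⟩ := exists_isGaussReduced H hH
  set R : Matrix (Fin 2) (Fin 2) ℤ := Uᵀ * H * U
  have hR : R.PosDef := hH.int_transpose_mul_mul hU
  have hRdet : R.det = 2 := by rw [det_transpose_mul_mul_of_isUnit hU, hdet]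
  have hbound := hred.three_mul_sq_le hR.int_transpose_eq
  have h10 : R 1 0 = R 0 1 := congrFun (congrFun hR.int_transpose_eq 0) 1
  have h00 : R 0 0 = 1 := by nlinarith [hR.diag_pos (i := 0)]
  have h01 : R 0 1 = 0 := by
    have := hred.1
    rw [h00] at this
    exact abs_nonpos_iff.mp (by omega)
  have h11 : R 1 1 = 2 := by
    rw [det_fin_two, h00, h01, h10, h01] at hRdet
    simpa using hRdet
  refine ⟨U, hU, show R = _ from ?_⟩
  ext i j; fin_cases i <;> fin_cases j <;> simp [h00, h01, h10, h11]

theorem exists_isUnit_apply_zero_eq (v : Fin 3 → ℤ) (hv : ∀ d : ℤ, (∀ i, d ∣ v i) → IsUnit d) :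
    ∃ U : Matrix (Fin 3) (Fin 3) ℤ, IsUnit U ∧ ∀ i, U i 0 = v i := by
  obtain ⟨g, p, r, hp, hr, a, b, hab⟩ :
      ∃ g p r : ℤ, v 0 = g * p ∧ v 1 = g * r ∧ IsCoprime p r := by
    by_cases h : Int.gcd (v 0) (v 1) = 0
    · obtain ⟨h0, h1⟩ := Int.gcd_eq_zero_iff.mp h
      exact ⟨0, 1, 0, by simp [h0], by simp [h1], isCoprime_one_left⟩
    · obtain ⟨g, p, r, -, hpr, hp, hr⟩ := Int.exists_gcd_one' (Nat.pos_of_ne_zero h)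
      exact ⟨g, p, r, by rw [hp, mul_comm], by rw [hr, mul_comm],
        Int.isCoprime_iff_gcd_eq_one.mpr hpr⟩
  obtain ⟨s, t, hst⟩ : IsCoprime g (v 2) := by
    rw [Int.isCoprime_iff_gcd_eq_one, ← Int.natAbs_natCast (Int.gcd g (v 2)),
      ← Int.isUnit_iff_natAbs_eq]
    refine hv _ fun i => ?_
    fin_cases i
    · exact (Int.gcd_dvd_left g (v 2)).trans (hp ▸ dvd_mul_right g p)
    · exact (Int.gcd_dvd_left g (v 2)).trans (hr ▸ dvd_mul_right g r)
    · exact Int.gcd_dvd_right g (v 2)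
  refine ⟨!![v 0, -b, -(t * p); v 1, a, -(t * r); v 2, 0, s], ?_, fun i => by fin_cases i <;> rfl⟩
  have hdet : (!![v 0, -b, -(t * p); v 1, a, -(t * r); v 2, 0, s]).det = 1 := by
    rw [det_fin_three]
    simp only [of_apply, cons_val', cons_val_zero, cons_val_one, cons_val, cons_val_fin_one, hp, hr]
    linear_combination (s * g + t * v 2) * hab + hst
  simp [isUnit_iff_isUnit_det, hdet]

namespace Matrix

/-- `B 0 0` times the Schur complement of the entry `B 0 0`. -/
def scaledSchur (B : Matrix (Fin 3) (Fin 3) ℤ) : Matrix (Fin 2) (Fin 2) ℤ :=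
  of fun i j => B 0 0 * B i.succ j.succ - B 0 i.succ * B 0 j.succ

variable {B : Matrix (Fin 3) (Fin 3) ℤ}

theorem mul_dotProduct_mulVec_cons (hB : Bᵀ = B) (x : ℤ) (w : Fin 2 → ℤ) :
    B 0 0 * (Fin.cons x w ⬝ᵥ B *ᵥ Fin.cons x w) =
      (B 0 0 * x + B 0 1 * w 0 + B 0 2 * w 1) ^ 2 + w ⬝ᵥ scaledSchur B *ᵥ w := by
  have h10 : B 1 0 = B 0 1 := congrFun (congrFun hB 0) 1
  have h20 : B 2 0 = B 0 2 := congrFun (congrFun hB 0) 2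
  have h21 : B 2 1 = B 1 2 := congrFun (congrFun hB 1) 2
  simp only [dotProduct, mulVec, Fin.sum_univ_succ, Fin.cons_zero, Fin.cons_succ,
    Fin.succ_zero_eq_one, Fin.succ_one_eq_two, Finset.univ_unique, Fin.default_eq_zero, Finset.sum_singleton, scaledSchur,
    of_apply, h10, h20, h21]
  ring

theorem det_scaledSchur (hB : Bᵀ = B) : (scaledSchur B).det = B 0 0 * B.det := by
  have h10 : B 1 0 = B 0 1 := congrFun (congrFun hB 0) 1
  have h20 : B 2 0 = B 0 2 := congrFun (congrFun hB 0) 2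
  have h21 : B 2 1 = B 1 2 := congrFun (congrFun hB 1) 2
  simp only [scaledSchur, det_fin_two, det_fin_three, of_apply, Fin.succ_zero_eq_one,
    Fin.succ_one_eq_two, h10, h20, h21]
  ring

theorem posDef_scaledSchur (hB : B.PosDef) : (scaledSchur B).PosDef := by
  have hsymm := hB.int_transpose_eq
  refine .of_int ?_ fun w hw => ?_
  · ext i j
    simp only [transpose_apply, scaledSchur, of_apply]
    rw [← congrFun (congrFun hsymm i.succ) j.succ, transpose_apply]
    ring
  · have h00 : 0 < B 0 0 := hB.diag_pos
    set x := -(B 0 1 * w 0 + B 0 2 * w 1)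
    have hv : (Fin.cons x (B 0 0 • w) : Fin 3 → ℤ) ≠ 0 := fun h =>
      hw (funext fun i => by simpa [h00.ne'] using congrFun h i.succ)
    have key := mul_dotProduct_mulVec_cons hsymm x (B 0 0 • w)
    simp only [mulVec_smul, dotProduct_smul, smul_dotProduct, smul_eq_mul, Pi.smul_apply] at key
    rw [show B 0 0 * x + B 0 1 * (B 0 0 * w 0) + B 0 2 * (B 0 0 * w 1) = 0 by ring] at key
    have := mul_pos h00 (hB.int_dotProduct_mulVec_pos hv)
    exact pos_of_mul_pos_right (pos_of_mul_pos_right (by linarith) h00.le) h00.le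

theorem three_mul_sq_le_dotProduct_scaledSchur (hB : B.PosDef)
    (hmin : ∀ v : Fin 3 → ℤ, v ≠ 0 → B 0 0 ≤ v ⬝ᵥ B *ᵥ v) {w : Fin 2 → ℤ} (hw : w ≠ 0) :
    3 * B 0 0 ^ 2 ≤ 4 * (w ⬝ᵥ scaledSchur B *ᵥ w) := by
  have h00 : 0 < B 0 0 := hB.diag_pos
  obtain ⟨x, hx⟩ := exists_two_mul_abs_add_mul_le (B 0 0) (B 0 1 * w 0 + B 0 2 * w 1) h00
  have hv : (Fin.cons x w : Fin 3 → ℤ) ≠ 0 := fun h =>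
    hw (funext fun i => by simpa using congrFun h i.succ)
  have key := mul_dotProduct_mulVec_cons hB.int_transpose_eq x w
  have hsq : 4 * (B 0 0 * x + B 0 1 * w 0 + B 0 2 * w 1) ^ 2 ≤ B 0 0 ^ 2 := by
    rw [show B 0 0 * x + B 0 1 * w 0 + B 0 2 * w 1 = B 0 1 * w 0 + B 0 2 * w 1 + x * B 0 0 by ring,
      ← sq_abs]
    nlinarith [abs_nonneg (B 0 1 * w 0 + B 0 2 * w 1 + x * B 0 0)]
  nlinarith [mul_le_mul_of_nonneg_left (hmin _ hv) h00.le]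

/-- Hermite's argument: the values of `scaledSchur B` are at least `3 m² / 4`, while Gauss
reduction gives one whose square is at most `8 m / 3`, where `m = B 0 0`. -/
theorem PosDef.apply_zero_zero_eq_one (hB : B.PosDef) (hdet : B.det = 2)
    (hmin : ∀ v : Fin 3 → ℤ, v ≠ 0 → B 0 0 ≤ v ⬝ᵥ B *ᵥ v) : B 0 0 = 1 := by
  have h00 : 0 < B 0 0 := hB.diag_pos
  obtain ⟨w, hw, hbound⟩ := exists_ne_zero_three_mul_sq_le _ (posDef_scaledSchur hB)
  rw [det_scaledSchur hB.int_transpose_eq, hdet] at hbound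
  have hlow := three_mul_sq_le_dotProduct_scaledSchur hB hmin hw
  have hsq : (3 * B 0 0 ^ 2) ^ 2 ≤ (4 * (w ⬝ᵥ scaledSchur B *ᵥ w)) ^ 2 :=
    pow_le_pow_left₀ (by positivity) hlow 2
  by_contra hne
  have h2 : 2 ≤ B 0 0 := by omega
  nlinarith [pow_le_pow_left₀ (by norm_num) h2 3]

section blockDiagOne

variable {R : Type*} [CommRing R]

def blockDiagOne (M : Matrix (Fin 2) (Fin 2) R) : Matrix (Fin 3) (Fin 3) R :=
  !![1, 0, 0; 0, M 0 0, M 0 1; 0, M 1 0, M 1 1]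

theorem blockDiagOne_transpose (M : Matrix (Fin 2) (Fin 2) R) :
    (blockDiagOne M)ᵀ = blockDiagOne Mᵀ := by
  ext i j; fin_cases i <;> fin_cases j <;> simp [blockDiagOne]

theorem blockDiagOne_mul (M N : Matrix (Fin 2) (Fin 2) R) :
    blockDiagOne M * blockDiagOne N = blockDiagOne (M * N) := by
  ext i j; fin_cases i <;> fin_cases j <;> simp [blockDiagOne, mul_apply, Fin.sum_univ_succ]

theorem det_blockDiagOne (M : Matrix (Fin 2) (Fin 2) R) : (blockDiagOne M).det = M.det := by
  simp [blockDiagOne, det_fin_three, det_fin_two]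

end blockDiagOne

theorem exists_transpose_mul_mul_eq_blockDiagOne (hB : Bᵀ = B) (h00 : B 0 0 = 1) :
    ∃ E : Matrix (Fin 3) (Fin 3) ℤ, IsUnit E ∧ Eᵀ * B * E = blockDiagOne (scaledSchur B) := by
  have h10 : B 1 0 = B 0 1 := congrFun (congrFun hB 0) 1
  have h20 : B 2 0 = B 0 2 := congrFun (congrFun hB 0) 2
  refine ⟨!![1, -B 0 1, -B 0 2; 0, 1, 0; 0, 0, 1], ?_, ?_⟩
  · simp [isUnit_iff_isUnit_det, det_fin_three]
  · ext i j
    fin_cases i <;> fin_cases j <;>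
      simp [mul_apply, Fin.sum_univ_succ, blockDiagOne, scaledSchur, h00, h10, h20] <;> ring

end Matrix

theorem exists_transpose_mul_diagonal_mul_eq (A : Matrix (Fin 3) (Fin 3) ℤ) (hA : A.PosDef)
    (hdet : A.det = 2) :
    ∃ U : Matrix (Fin 3) (Fin 3) ℤ, IsUnit U ∧ Uᵀ * diagonal ![1, 1, 2] * U = A := by
  obtain ⟨v, hv, hmin⟩ := hA.int_exists_forall_le
  obtain ⟨U, hU, hUv⟩ := exists_isUnit_apply_zero_eq v fun _ => hA.isUnit_of_forall_dvd hv hmin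
  set B : Matrix (Fin 3) (Fin 3) ℤ := Uᵀ * A * U
  have hB : B.PosDef := hA.int_transpose_mul_mul hU
  have hB00 : B 0 0 = 1 := by
    refine hB.apply_zero_zero_eq_one (by rw [det_transpose_mul_mul_of_isUnit hU, hdet]) ?_
    intro w hw
    change (Uᵀ * A * U) 0 0 ≤ w ⬝ᵥ (Uᵀ * A * U) *ᵥ w
    rw [transpose_mul_mul_apply, dotProduct_mulVec_transpose_mul_mul, funext hUv]
    exact hmin _ fun h => hw ((mulVec_injective_of_isUnit hU).eq_iff' (mulVec_zero U) |>.mp h)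
  obtain ⟨E, hE, hEB⟩ := exists_transpose_mul_mul_eq_blockDiagOne hB.int_transpose_eq hB00
  obtain ⟨V, hV, hVS⟩ := exists_transpose_mul_mul_eq_diagonal_one_two _ (posDef_scaledSchur hB)
    (by rw [det_scaledSchur hB.int_transpose_eq, hB00, det_transpose_mul_mul_of_isUnit hU, hdet,
      one_mul])
  set W := U * E * blockDiagOne V
  have hW : IsUnit W := (hU.mul hE).mul (by
    rw [isUnit_iff_isUnit_det, det_blockDiagOne, ← isUnit_iff_isUnit_det]; exact hV)
  have hWA : Wᵀ * A * W = diagonal ![1, 1, 2] := by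
    calc Wᵀ * A * W = (blockDiagOne V)ᵀ * (Eᵀ * B * E) * blockDiagOne V := by
          simp only [W, B, transpose_mul, Matrix.mul_assoc]
      _ = diagonal ![1, 1, 2] := by
          rw [hEB, blockDiagOne_transpose, blockDiagOne_mul, blockDiagOne_mul, hVS]
          ext i j; fin_cases i <;> fin_cases j <;> simp [blockDiagOne]
  refine ⟨W⁻¹, isUnit_nonsing_inv_iff.mpr hW, ?_⟩
  have hWdet := (isUnit_iff_isUnit_det W).mp hW
  rw [← hWA, transpose_nonsing_inv]
  simp only [← Matrix.mul_assoc, nonsing_inv_mul _ (isUnit_det_transpose W hWdet)]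
  simp [Matrix.mul_assoc, mul_nonsing_inv _ hWdet]

open scoped NumberTheorySymbols

theorem exists_prime_emod_eight_eq_one_dvd_add_two (N : ℕ) (hN : N % 8 = 1) :
    ∃ q : ℕ, q.Prime ∧ q % 8 = 1 ∧ (N : ℤ) ∣ q + 2 := by
  -- `3 N - 2` is `1` modulo `8` and `-2` modulo `N`.
  have hcop : IsCoprime (3 * N - 2 : ℤ) (8 * N : ℕ) := by
    obtain ⟨t, ht⟩ : ∃ t : ℤ, (N : ℤ) = 8 * t + 1 := ⟨N / 8, by omega⟩
    push_cast
    exact IsCoprime.mul_right ⟨1, -3 * t, by linear_combination 3 * ht⟩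
      ⟨4 * t, 1 - 12 * t, by linear_combination ht⟩
  obtain ⟨q, -, hq, hqN⟩ := Nat.forall_exists_prime_gt_and_zmodEq 0 (by omega) hcop
  push_cast at hqN
  refine ⟨q, hq, ?_, ?_⟩
  · have := (hqN.of_mul_right (N : ℤ)).dvd
    omega
  · have := (hqN.of_mul_left 8).dvd
    rw [show (3 * N - 2 : ℤ) - q = 3 * N - (q + 2) by ring] at this
    exact (dvd_sub_right (dvd_mul_left _ _)).mp this

theorem exists_dvd_sq_add (N q : ℕ) [Fact q.Prime] (hN : N % 8 = 1) (hq : q % 8 = 1) (D : ℤ)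
    (hDN : D * N = q + 2) : ∃ β : ℤ, (q : ℤ) ∣ β ^ 2 + D := by
  have hqodd : Odd q := Nat.odd_iff.mpr (by omega)
  have hNodd : Odd N := Nat.odd_iff.mpr (by omega)
  have hJN : J(N | q) = 1 := by
    have hmod : (-2 : ℤ) ≡ q [ZMOD N] := Int.modEq_iff_dvd.mpr ⟨D, by linear_combination -hDN⟩
    rw [jacobiSym.quadratic_reciprocity_one_mod_four (by omega) hqodd,
      jacobiSym.mod_left' hmod.symm, jacobiSym.at_neg_two hNodd, ZMod.χ₈'_nat_eq_if_mod_eight]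
    simp [hN, Nat.odd_iff.mp hNodd]
  have hJ : J(-D | q) = 1 := by
    have hmod : (-2 : ℤ) ≡ -D * N [ZMOD q] := Int.modEq_iff_dvd.mpr ⟨-1, by linear_combination -hDN⟩
    have h := jacobiSym.mul_left (-D) N q
    rw [hJN, mul_one, ← jacobiSym.mod_left' hmod, jacobiSym.at_neg_two hqodd,
      ZMod.χ₈'_nat_eq_if_mod_eight] at h
    simpa [hq, Nat.odd_iff.mp hqodd] using h.symm
  obtain ⟨r, hr⟩ := ZMod.isSquare_of_jacobiSym_eq_one hJ
  refine ⟨r.cast, (ZMod.intCast_zmod_eq_zero_iff_dvd _ _).mp ?_⟩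
  push_cast
  rw [sq, ← hr]
  push_cast
  ring

def dirichletForm (q E β N : ℤ) : Matrix (Fin 3) (Fin 3) ℤ :=
  !![E, -β, 1; -β, q, 0; 1, 0, N]

section dirichletForm

variable {q D E β N : ℤ}

theorem mul_dotProduct_mulVec_dirichletForm (hE : q * E = β ^ 2 + D) (hDN : D * N = q + 2)
    (v : Fin 3 → ℤ) : q * D * (v ⬝ᵥ dirichletForm q E β N *ᵥ v) =
      D * (q * v 1 - β * v 0) ^ 2 + (D * v 0 + q * v 2) ^ 2 + 2 * q * v 2 ^ 2 := by
  simp only [dirichletForm, dotProduct, mulVec, Fin.sum_univ_three, of_apply, cons_val',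
    cons_val_zero, cons_val_one, cons_val, cons_val_fin_one]
  linear_combination (D * v 0 ^ 2) * hE + (q * v 2 ^ 2) * hDN

theorem posDef_dirichletForm (hq : 0 < q) (hD : 0 < D) (hE : q * E = β ^ 2 + D)
    (hDN : D * N = q + 2) : (dirichletForm q E β N).PosDef := by
  refine .of_int ?_ fun v hv => ?_
  · ext i j; fin_cases i <;> fin_cases j <;> simp [dirichletForm]
  refine pos_of_mul_pos_right (a := q * D) ?_ (by positivity)
  rw [mul_dotProduct_mulVec_dirichletForm hE hDN]
  by_contra! hle
  have h2 : v 2 = 0 := by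
    have : 0 ≤ D * (q * v 1 - β * v 0) ^ 2 := by positivity
    exact pow_eq_zero_iff two_ne_zero |>.mp (by nlinarith [sq_nonneg (D * v 0 + q * v 2)])
  have h0 : v 0 = 0 := by
    rw [h2] at hle
    have : (D * v 0) ^ 2 = 0 := by nlinarith [mul_nonneg hD.le (sq_nonneg (q * v 1 - β * v 0))]
    simpa [hD.ne'] using this
  have h1 : v 1 = 0 := by
    rw [h0, h2] at hle
    have : (q * v 1) ^ 2 = 0 := by nlinarith
    simpa [hq.ne'] using this
  exact hv (funext fun i => by fin_cases i <;> assumption)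

theorem det_dirichletForm (hE : q * E = β ^ 2 + D) (hDN : D * N = q + 2) :
    (dirichletForm q E β N).det = 2 := by
  simp only [dirichletForm, det_fin_three, of_apply, cons_val', cons_val_zero, cons_val_one,
    cons_val, cons_val_fin_one]
  linear_combination N * hE + hDN

end dirichletForm

theorem exists_sq_add_sq_add_two_mul_sq (N : ℕ) (h8 : N % 8 = 1) (h1 : 1 < N) :
    ∃ x y z : ℤ, (N : ℤ) = x ^ 2 + y ^ 2 + 2 * z ^ 2 ∧ x ^ 2 ≠ N ∧ y ^ 2 ≠ N := by
  obtain ⟨q, hq, hq8, D, hD⟩ := exists_prime_emod_eight_eq_one_dvd_add_two N h8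
  have := Fact.mk hq
  have hDN : D * N = q + 2 := by linear_combination -hD
  obtain ⟨β, E, hE⟩ := exists_dvd_sq_add N q h8 hq8 D hDN
  have hq0 : (0 : ℤ) < q := by exact_mod_cast hq.pos
  have hD0 : 0 < D := pos_of_mul_pos_left (b := (N : ℤ)) (by rw [hDN]; positivity) (by positivity)
  obtain ⟨U, -, hU⟩ := exists_transpose_mul_diagonal_mul_eq _
    (posDef_dirichletForm hq0 hD0 hE.symm hDN) (det_dirichletForm hE.symm hDN)
  have h22 := congrFun (congrFun hU 2) 2
  have h02 := congrFun (congrFun hU 0) 2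
  simp only [dirichletForm, mul_apply, transpose_apply, Fin.sum_univ_three, diagonal_apply_eq,
    diagonal_apply_ne, ne_eq, Fin.reduceEq, not_false_eq_true, cons_val_zero, cons_val_one,
    cons_val, cons_val', cons_val_fin_one, of_apply, mul_one, mul_zero, add_zero, zero_add] at h22 h02
  -- A representation by a single square `a²` would force `a = ±1`, as `U` pairs it with `1`.
  have hne : ∀ a b c a' b' c' : ℤ, (N : ℤ) = a ^ 2 + b ^ 2 + 2 * c ^ 2 →
      a' * a + b' * b + 2 * (c' * c) = 1 → a ^ 2 ≠ N := by
    intro a b c a' b' c' hN habc ha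
    have hb : b = 0 := pow_eq_zero_iff two_ne_zero |>.mp (by nlinarith [sq_nonneg b, sq_nonneg c])
    have hc : c = 0 := pow_eq_zero_iff two_ne_zero |>.mp (by nlinarith [sq_nonneg b, sq_nonneg c])
    subst hb hc
    rcases Int.eq_one_or_neg_one_of_mul_eq_one (show a * a' = 1 by linear_combination habc)
      with rfl | rfl <;> omega
  refine ⟨U 0 2, U 1 2, U 2 2, by linear_combination -h22, ?_, ?_⟩
  · exact hne (U 0 2) (U 1 2) (U 2 2) (U 0 0) (U 1 0) (U 2 0) (by linear_combination -h22)
      (by linear_combination h02)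
  · exact hne (U 1 2) (U 0 2) (U 2 2) (U 1 0) (U 0 0) (U 2 0) (by linear_combination -h22)
      (by linear_combination h02)

theorem sq_emod_eight (a : ℤ) :
    a % 4 = 0 ∧ a ^ 2 % 8 = 0 ∨ a % 4 = 2 ∧ a ^ 2 % 8 = 4 ∨ a % 2 = 1 ∧ a ^ 2 % 8 = 1 := by
  have h : a ^ 2 % 8 = a % 8 * (a % 8) % 8 := by rw [sq, Int.mul_emod]
  have : a % 8 = 0 ∨ a % 8 = 1 ∨ a % 8 = 2 ∨ a % 8 = 3 ∨ a % 8 = 4 ∨ a % 8 = 5 ∨ a % 8 = 6 ∨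
    a % 8 = 7 := by omega
  rcases this with h' | h' | h' | h' | h' | h' | h' | h' <;> rw [h'] at h <;> omega

theorem sq_emod_three (a : ℤ) : a % 3 = 0 ∧ a ^ 2 % 3 = 0 ∨ a % 3 ≠ 0 ∧ a ^ 2 % 3 = 1 := by
  have h : a ^ 2 % 3 = a % 3 * (a % 3) % 3 := by rw [sq, Int.mul_emod]
  have : a % 3 = 0 ∨ a % 3 = 1 ∨ a % 3 = 2 := by omega
  rcases this with h' | h' | h' <;> rw [h'] at h <;> omega

theorem exists_sq_add_two_mul_sq_add_sixteen_mul_sq {N x y z : ℤ} (h8 : N % 8 = 1)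
    (hN : N = x ^ 2 + y ^ 2 + 2 * z ^ 2) (hx : Odd x) :
    ∃ c, N = x ^ 2 + 2 * z ^ 2 + 16 * c ^ 2 := by
  have := sq_emod_eight x
  have := sq_emod_eight y
  have := sq_emod_eight z
  have hx2 : x % 2 = 1 := Int.odd_iff.mp hx
  obtain ⟨c, rfl⟩ : 4 ∣ y := by omega
  exact ⟨c, by rw [hN]; ring⟩

theorem exists_nine_mul_eq_two_mul_sq_add_sixteen_mul_sq {w d : ℤ} (h : ¬(3 ∣ w ∧ 3 ∣ d)) :
    ∃ v c, 9 * (2 * w ^ 2 + 16 * d ^ 2) = 2 * v ^ 2 + 16 * c ^ 2 ∧ ¬3 ∣ c := by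
  by_cases hwd : 3 ∣ w + d
  · exact ⟨w + 8 * d, w - d, by ring, by omega⟩
  · exact ⟨w - 8 * d, w + d, by ring, hwd⟩

theorem exists_two_mul_sq_add_sixteen_mul_sq_not_dvd {m v c : ℤ} (hm : m = 2 * v ^ 2 + 16 * c ^ 2)
    (hpos : 0 < m) (h3 : m % 3 ≠ 2) : ∃ v c, m = 2 * v ^ 2 + 16 * c ^ 2 ∧ ¬3 ∣ c := by
  induction hk : m.toNat using Nat.strong_induction_on generalizing m v c with
  | _ k ih =>
  by_cases hc : 3 ∣ c
  swap
  · exact ⟨v, c, hm, hc⟩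
  have := sq_emod_three v
  have := sq_emod_three c
  obtain ⟨c', rfl⟩ := hc
  obtain ⟨v', rfl⟩ : 3 ∣ v := by omega
  set m' := 2 * v' ^ 2 + 16 * c' ^ 2
  have hm' : m = 9 * m' := by rw [hm]; ring
  obtain ⟨w, d, hwd, hd⟩ : ∃ w d, m' = 2 * w ^ 2 + 16 * d ^ 2 ∧ ¬(3 ∣ w ∧ 3 ∣ d) := by
    by_cases h2 : m' % 3 = 2
    · have := sq_emod_three v'
      have := sq_emod_three c'
      exact ⟨v', c', rfl, by omega⟩
    · obtain ⟨w, d, hwd, hd⟩ := ih m'.toNat (by omega) rfl (by omega) h2 rfl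
      exact ⟨w, d, hwd, fun h => hd h.2⟩
  obtain ⟨v₀, c₀, h, hc₀⟩ := exists_nine_mul_eq_two_mul_sq_add_sixteen_mul_sq hd
  exact ⟨v₀, c₀, by rw [hm', hwd, h], hc₀⟩

theorem exists_three_mul_sq_add_six_mul_sq {u v : ℤ} (h : 3 ∣ u ^ 2 + 2 * v ^ 2) :
    ∃ a b, u ^ 2 + 2 * v ^ 2 = 3 * a ^ 2 + 6 * b ^ 2 := by
  have hprod : (3 : ℤ) ∣ (u - v) * (u + v) := by
    rw [show (u - v) * (u + v) = u ^ 2 + 2 * v ^ 2 - 3 * v ^ 2 by ring]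
    exact dvd_sub h (dvd_mul_right 3 _)
  rcases Int.prime_three.dvd_mul.mp hprod with ⟨b, hb⟩ | ⟨b, hb⟩
  · exact ⟨v + b, b, by rw [show u = v + b + 2 * b by linear_combination hb]; ring⟩
  · exact ⟨-v + b, b, by rw [show u = -v + b + 2 * b by linear_combination hb]; ring⟩

theorem exists_three_mul_sq_add_six_mul_sq_add_sixteen_mul_sq (N : ℕ) (h24 : N % 24 = 1)
    (h1 : 1 < N) : ∃ a b c : ℤ, (N : ℤ) = 3 * a ^ 2 + 6 * b ^ 2 + 16 * c ^ 2 ∧ ¬3 ∣ c := by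
  obtain ⟨x, y, z, hN, hx, hy⟩ := exists_sq_add_sq_add_two_mul_sq N (by omega) h1
  have h8 : (N : ℤ) % 8 = 1 := by omega
  obtain ⟨u, c, hNu, hu⟩ : ∃ u c : ℤ, (N : ℤ) = u ^ 2 + 2 * z ^ 2 + 16 * c ^ 2 ∧ u ^ 2 ≠ N := by
    have := sq_emod_eight x
    have := sq_emod_eight y
    have := sq_emod_eight z
    by_cases hxo : x % 2 = 1
    · obtain ⟨c, hc⟩ := exists_sq_add_two_mul_sq_add_sixteen_mul_sq h8 hN (Int.odd_iff.mpr hxo)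
      exact ⟨x, c, hc, hx⟩
    · obtain ⟨c, hc⟩ := exists_sq_add_two_mul_sq_add_sixteen_mul_sq (x := y) (y := x) (z := z) h8
        (by rw [hN]; ring) (Int.odd_iff.mpr (by omega))
      exact ⟨y, c, hc, hy⟩
  have := sq_emod_three u
  obtain ⟨v, c', hvc, hc'⟩ := exists_two_mul_sq_add_sixteen_mul_sq_not_dvd
    (m := N - u ^ 2) (v := z) (c := c) (by rw [hNu]; ring)
    (lt_of_le_of_ne (by nlinarith) (sub_ne_zero.mpr hu.symm).symm) (by omega)
  have := sq_emod_three c'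
  obtain ⟨a, b, hab⟩ := exists_three_mul_sq_add_six_mul_sq (u := u) (v := v) (by omega)
  exact ⟨a, b, c', by linear_combination hab + hvc, hc'⟩

theorem two_mul_polygonal (m x : ℤ) : 2 * polygonal m x = (m - 2) * x ^ 2 - (m - 4) * x := by
  obtain ⟨k, hk⟩ := Int.even_mul_pred_self x
  exact Int.mul_ediv_cancel' ⟨(m - 2) * k + x, by linear_combination (m - 2) * hk⟩

theorem polygonal_three_add_polygonal_three_add_polygonal_eight (x y z : ℤ) :
    24 * (polygonal 3 x + 2 * polygonal 3 y + 2 * polygonal 8 z) + 25 =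
      3 * (2 * x + 1) ^ 2 + 6 * (2 * y + 1) ^ 2 + 16 * (3 * z - 1) ^ 2 := by
  linear_combination 12 * two_mul_polygonal 3 x + 24 * two_mul_polygonal 3 y +
    24 * two_mul_polygonal 8 z

theorem universal_stmt_8 :
    ∀ n : ℕ, ∃ x y z : ℤ, polygonal 3 x + 2 * polygonal 3 y + 2 * polygonal 8 z = n := by
  intro n
  obtain ⟨a, b, c, hN, hc⟩ :=
    exists_three_mul_sq_add_six_mul_sq_add_sixteen_mul_sq (24 * n + 25) (by omega) (by omega)
  push_cast at hN
  have := sq_emod_eight a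
  have := sq_emod_eight b
  obtain ⟨x, rfl⟩ : Odd a := Int.odd_iff.mpr (by omega)
  obtain ⟨y, rfl⟩ : Odd b := Int.odd_iff.mpr (by omega)
  obtain ⟨z, hz⟩ : ∃ z, c ^ 2 = (3 * z - 1) ^ 2 := by
    rcases (by omega : c % 3 = 1 ∨ c % 3 = 2) with h | h
    · exact ⟨(1 - c) / 3, by rw [show 3 * ((1 - c) / 3) - 1 = -c by omega]; ring⟩
    · exact ⟨(c + 1) / 3, by rw [show 3 * ((c + 1) / 3) - 1 = c by omega]⟩
  refine ⟨x, y, z, ?_⟩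
  have := polygonal_three_add_polygonal_three_add_polygonal_eight x y z
  linarith
end

section
/- Let n be a positive integer with n not divisible by 5. If there exist integers X, Y, Z such that X² + 5Y² + 10Z² = 8n, then there exist integers a, b, c, all odd, such that a² + 5b² + 10c² = 8n. -/
/-!
Write `Q x y z = x² + 5y² + 10z²`. Modulo 8, `Q X Y Z ≡ 0` forces `X, Y, Z` to be all odd or all
even, so it suffices to turn a representation of an even `m > 0` into an odd representation of
`4m`. This is done by two integral identities `Q(L v) = 16 Q(v)`; when the entries of `L v` are
all `≡ 2 (mod 4)`, halving them gives an odd representation of `4 Q(v)`. Up to the sign changes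
`x ↦ -x`, `z ↦ -z` this congruence can be reached unless `x, y, z` are even with
`x ≡ y (mod 4)`; then `Q(x/2, y/2, z/2) = m/4` is again even, by descent `m` itself has an odd
representation, and the first identity applies to it.
-/

def Q (x y z : ℤ) : ℤ := x ^ 2 + 5 * y ^ 2 + 10 * z ^ 2

def HasOddRep (n : ℤ) : Prop :=
  ∃ a b c : ℤ, a % 2 = 1 ∧ b % 2 = 1 ∧ c % 2 = 1 ∧ Q a b c = n

section Identities

variable (x y z : ℤ)

lemma Q_neg_left : Q (-x) y z = Q x y z := by unfold Q; ring

lemma Q_neg_right : Q x y (-z) = Q x y z := by unfold Q; ring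

lemma Q_two_mul : Q (2 * x) (2 * y) (2 * z) = 4 * Q x y z := by unfold Q; ring

lemma Q_mul_sixteen :
    Q (x + 5 * y + 10 * z) (x - 3 * y + 2 * z) (x + y - 2 * z) = 16 * Q x y z := by
  unfold Q; ring

end Identities

lemma Q_mul_sixteen_two_mul (u t z : ℤ) :
    Q (7 * u + 5 * t + 5 * z) (5 * z - u - 3 * t) (z - u + 5 * t) = 16 * Q (2 * u) (2 * t) z := by
  unfold Q; ring

lemma sq_emod_of_emod_two (x : ℤ) : x % 2 = 1 ∧ x ^ 2 % 8 = 1 ∨ x % 2 = 0 ∧ x ^ 2 % 4 = 0 := by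
  rcases Int.emod_two_eq_zero_or_one x with h | h
  · have : (2 : ℤ) ^ 2 ∣ x ^ 2 := pow_dvd_pow_of_dvd (Int.dvd_of_emod_eq_zero h) 2
    omega
  · have := Int.eight_dvd_sq_sub_one_of_odd (Int.odd_iff.mpr h)
    omega

lemma Q_emod_two (x y z : ℤ) : Q x y z % 2 = (x + y) % 2 := by
  unfold Q
  rcases sq_emod_of_emod_two x with hx | hx <;> rcases sq_emod_of_emod_two y with hy | hy <;>
    omega

lemma parity_of_Q_emod_eight {x y z : ℤ} (h : Q x y z % 8 = 0) :
    (x % 2 = 1 ∧ y % 2 = 1 ∧ z % 2 = 1) ∨ (x % 2 = 0 ∧ y % 2 = 0 ∧ z % 2 = 0) := by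
  unfold Q at h
  rcases sq_emod_of_emod_two x with hx | hx <;> rcases sq_emod_of_emod_two y with hy | hy <;>
    rcases sq_emod_of_emod_two z with hz | hz <;> omega

lemma hasOddRep_four_mul_of_Q_eq {A B C m : ℤ} (hQ : Q A B C = 16 * m)
    (hA : A % 4 = 2) (hB : B % 4 = 2) (hC : C % 4 = 2) : HasOddRep (4 * m) := by
  obtain ⟨a, rfl⟩ : ∃ a, A = 2 * a := ⟨A / 2, by omega⟩
  obtain ⟨b, rfl⟩ : ∃ b, B = 2 * b := ⟨B / 2, by omega⟩
  obtain ⟨c, rfl⟩ : ∃ c, C = 2 * c := ⟨C / 2, by omega⟩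
  rw [Q_two_mul] at hQ
  exact ⟨a, b, c, by omega, by omega, by omega, by omega⟩

lemma hasOddRep_four_mul_Q_of_emod_four {x y z : ℤ} (hxy : x % 2 = y % 2)
    (h : (x + y + 2 * z) % 4 = 2) : HasOddRep (4 * Q x y z) :=
  hasOddRep_four_mul_of_Q_eq (Q_mul_sixteen x y z) (by omega) (by omega) (by omega)

lemma hasOddRep_four_mul_Q_of_odd {x y z : ℤ} (hx : x % 2 = 1) (hy : y % 2 = 1) :
    HasOddRep (4 * Q x y z) := by
  rcases eq_or_ne ((x + y + 2 * z) % 4) 2 with h | h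
  · exact hasOddRep_four_mul_Q_of_emod_four (by omega) h
  · rw [← Q_neg_left]
    exact hasOddRep_four_mul_Q_of_emod_four (by omega) (by omega)

lemma hasOddRep_four_mul_Q_two_mul {u t z : ℤ} (hz : z % 2 = 1) (hut : (u + t) % 2 = 1) :
    HasOddRep (4 * Q (2 * u) (2 * t) z) := by
  rcases eq_or_ne ((3 * u + t + z) % 4) 2 with h | h
  · exact hasOddRep_four_mul_of_Q_eq (Q_mul_sixteen_two_mul u t z)
      (by omega) (by omega) (by omega)
  · rw [← Q_neg_right]
    exact hasOddRep_four_mul_of_Q_eq (Q_mul_sixteen_two_mul u t (-z))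
      (by omega) (by omega) (by omega)

theorem hasOddRep_four_mul_Q (x y z : ℤ) (hpos : 0 < Q x y z) (heven : Q x y z % 2 = 0) :
    HasOddRep (4 * Q x y z) := by
  have hxy : x % 2 = y % 2 := by have := Q_emod_two x y z; omega
  by_cases hx : x % 2 = 1
  · exact hasOddRep_four_mul_Q_of_odd hx (by omega)
  by_cases h4 : (x + y + 2 * z) % 4 = 2
  · exact hasOddRep_four_mul_Q_of_emod_four hxy h4
  obtain ⟨u, rfl⟩ : ∃ u, x = 2 * u := ⟨x / 2, by omega⟩
  obtain ⟨t, rfl⟩ : ∃ t, y = 2 * t := ⟨y / 2, by omega⟩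
  by_cases hz : z % 2 = 1
  · exact hasOddRep_four_mul_Q_two_mul hz (by omega)
  obtain ⟨w, rfl⟩ : ∃ w, z = 2 * w := ⟨z / 2, by omega⟩
  rw [Q_two_mul] at hpos ⊢
  have hdesc : Q u t w % 2 = 0 := by have := Q_emod_two u t w; omega
  obtain ⟨a, b, c, ha, hb, -, habc⟩ := hasOddRep_four_mul_Q u t w (by omega) hdesc
  rw [← habc]
  exact hasOddRep_four_mul_Q_of_odd ha hb
termination_by (Q x y z).toNat
decreasing_by subst_vars; simp only [Q_two_mul] at *; omega

theorem odd_solution_of_solution_general (n : ℤ) (hn : 0 < n)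
    (h : ∃ X Y Z : ℤ, X ^ 2 + 5 * Y ^ 2 + 10 * Z ^ 2 = 8 * n) :
    ∃ a b c : ℤ, a ≡ 1 [ZMOD 2] ∧ b ≡ 1 [ZMOD 2] ∧ c ≡ 1 [ZMOD 2] ∧
      a ^ 2 + 5 * b ^ 2 + 10 * c ^ 2 = 8 * n := by
  suffices HasOddRep (8 * n) from this
  obtain ⟨X, Y, Z, hQ⟩ := h
  change Q X Y Z = 8 * n at hQ
  rcases parity_of_Q_emod_eight (by omega : Q X Y Z % 8 = 0) with ⟨hX, hY, hZ⟩ | ⟨hX, hY, hZ⟩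
  · exact ⟨X, Y, Z, hX, hY, hZ, hQ⟩
  obtain ⟨x, rfl⟩ : ∃ x, X = 2 * x := ⟨X / 2, by omega⟩
  obtain ⟨y, rfl⟩ : ∃ y, Y = 2 * y := ⟨Y / 2, by omega⟩
  obtain ⟨z, rfl⟩ : ∃ z, Z = 2 * z := ⟨Z / 2, by omega⟩
  rw [Q_two_mul] at hQ
  have := hasOddRep_four_mul_Q x y z (by omega) (by omega)
  rwa [show 4 * Q x y z = 8 * n by omega] at this

theorem odd_solution_of_solution (n : ℤ) (hn : 0 < n) (h5 : ¬ (5 ∣ n))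
    (h : ∃ X Y Z : ℤ, X ^ 2 + 5 * Y ^ 2 + 10 * Z ^ 2 = 8 * n) :
    ∃ a b c : ℤ, a ≡ 1 [ZMOD 2] ∧ b ≡ 1 [ZMOD 2] ∧ c ≡ 1 [ZMOD 2] ∧
      a ^ 2 + 5 * b ^ 2 + 10 * c ^ 2 = 8 * n :=
  odd_solution_of_solution_general n hn h
end
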